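/- Let N > 2 and let g: ℝ^N → ℝ be a radial C² function, written g(x) = G(|x|), and let w(r) = r^{(N-1)/2}·(1+r^α)^{b/(2α)}·G(r). Then for x ≠ 0, Δg(x) + b·(|x|^{α-1}/(1+|x|^α))·(x/|x|)·∇g(x) equals (w''(r)/w(r) - m(r))·g(x) at r = |x|, where m(r) = (N-1)(N-3)/(4r²) + (b/2)(N-2+α)·r^{α-2}/(1+r^α) + (bα/2)(b/(2α)-1)·(r^{α-1}/(1+r^α))². -/

import Mathlib

open Real

/-- The Euclidean Laplacian of a function on `ℝ^N`. -/
noncomputable def laplacian {N : ℕ} (f : EuclideanSpace ℝ (Fin N) → ℝ)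
    (x : EuclideanSpace ℝ (Fin N)) : ℝ :=
  ∑ i : Fin N, fderiv ℝ (fun y => fderiv ℝ f y (EuclideanSpace.single i 1)) x
    (EuclideanSpace.single i 1)

/-!
Write `r = ‖x‖` and `φ(r) = r^((N-1)/2) (1 + r^α)^(b/(2α))`, so that `w = φ G`. For a radial
function `∇g(x) = G'(r) x / r` and `Δg(x) = G'' + (N-1)/r G'`, so the left-hand side is
`G'' + 2 h G'`, where `h = φ'/φ = (N-1)/(2r) + (b/2) r^(α-1)/(1+r^α)`. On the other side
`w'' = φ (G'' + 2 h G' + (h² + h') G)`, and the potential `m` is exactly the Riccati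
combination `h² + h'` of the logarithmic derivative of `φ`.
-/

open Filter Topology InnerProductSpace

section Radial

variable {E : Type*} [NormedAddCommGroup E] [InnerProductSpace ℝ E] [CompleteSpace E]

theorem hasGradientAt_norm {y : E} (hy : y ≠ 0) : HasGradientAt (‖·‖) (‖y‖⁻¹ • y) y := by
  have hny : 0 < ‖y‖ := norm_pos_iff.mpr hy
  have hsqrt := (hasStrictFDerivAt_norm_sq y).hasFDerivAt.sqrt (by positivity)
  simp only [sqrt_sq (norm_nonneg _)] at hsqrt
  refine hsqrt.congr_fderiv ?_
  ext v
  simp only [one_div, mul_inv_rev, smul_apply, coe_innerSL_apply, nsmul_eq_mul, Nat.cast_ofNat,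
    smul_eq_mul, map_smul, toDual_apply_apply]
  field_simp

theorem HasDerivAt.hasGradientAt_comp_norm {G : ℝ → ℝ} {G' : ℝ} {y : E} (hy : y ≠ 0)
    (hG : HasDerivAt G G' ‖y‖) : HasGradientAt (fun z => G ‖z‖) ((G' / ‖y‖) • y) y := by
  refine (hG.comp_hasFDerivAt y (hasGradientAt_norm hy).hasFDerivAt).congr_fderiv ?_
  ext v
  simp only [map_smul, smul_apply, toDual_apply_apply, smul_eq_mul]
  ring

theorem fderiv_comp_norm_apply {G : ℝ → ℝ} {G' : ℝ} {y : E} (hy : y ≠ 0)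
    (hG : HasDerivAt G G' ‖y‖) (v : E) :
    fderiv ℝ (fun z => G ‖z‖) y v = G' / ‖y‖ * inner ℝ y v := by
  rw [(hG.hasGradientAt_comp_norm hy).hasFDerivAt.fderiv, toDual_apply_apply,
    real_inner_smul_left]

theorem inner_gradient_comp_norm {G : ℝ → ℝ} {G' : ℝ} {y : E} (hy : y ≠ 0)
    (hG : HasDerivAt G G' ‖y‖) :
    inner ℝ (‖y‖⁻¹ • y) (gradient (fun z => G ‖z‖) y) = G' := by
  have hny : ‖y‖ ≠ 0 := norm_ne_zero_iff.mpr hy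
  rw [(hG.hasGradientAt_comp_norm hy).gradient, real_inner_smul_left, real_inner_smul_right,
    real_inner_self_eq_norm_sq]
  field_simp

end Radial

theorem laplacian_comp_norm {N : ℕ} {G G' : ℝ → ℝ} {G'' : ℝ} {x : EuclideanSpace ℝ (Fin N)}
    (hx : x ≠ 0) (hG : ∀ᶠ t in 𝓝 ‖x‖, HasDerivAt G (G' t) t) (hG' : HasDerivAt G' G'' ‖x‖) :
    laplacian (fun y => G ‖y‖) x = G'' + (N - 1) / ‖x‖ * G' ‖x‖ := by
  have hr : 0 < ‖x‖ := norm_pos_iff.mpr hx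
  set ψ' := (G'' * ‖x‖ - G' ‖x‖ * 1) / ‖x‖ ^ 2
  have hψ : HasDerivAt (fun t => G' t / t) ψ' ‖x‖ := hG'.div (hasDerivAt_id _) hr.ne'
  have hpartial (i : Fin N) :
      (fun y => fderiv ℝ (fun z => G ‖z‖) y (EuclideanSpace.single i 1)) =ᶠ[𝓝 x]
        fun y => G' ‖y‖ / ‖y‖ * y i := by
    filter_upwards [continuous_norm.continuousAt.eventually hG, eventually_ne_nhds hx]
      with y hGy hy
    rw [fderiv_comp_norm_apply hy hGy, EuclideanSpace.inner_single_right]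
    simp
  have hsecond (i : Fin N) :
      fderiv ℝ (fun y => fderiv ℝ (fun z => G ‖z‖) y (EuclideanSpace.single i 1)) x
        (EuclideanSpace.single i 1) = G' ‖x‖ / ‖x‖ + ψ' / ‖x‖ * x i ^ 2 := by
    have hprod : HasFDerivAt (fun y : EuclideanSpace ℝ (Fin N) => G' ‖y‖ / ‖y‖ * y i) _ x :=
      (hψ.hasGradientAt_comp_norm hx).hasFDerivAt.fun_mul
        (EuclideanSpace.proj i : EuclideanSpace ℝ (Fin N) →L[ℝ] ℝ).hasFDerivAt
    rw [(hpartial i).fderiv_eq, hprod.fderiv]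
    simp only [map_smul, add_apply, smul_apply, PiLp.proj_apply, PiLp.single_eq_same, smul_eq_mul,
      mul_one, toDual_apply_apply, EuclideanSpace.inner_single_right, ringHom_apply, one_mul,
      add_right_inj]
    ring
  simp only [laplacian, hsecond, Finset.sum_add_distrib, ← Finset.mul_sum,
    ← EuclideanSpace.real_norm_sq_eq, Finset.sum_const, Finset.card_univ, Fintype.card_fin,
    nsmul_eq_mul, ψ']
  field_simp
  ring

theorem deriv_deriv_mul_of_logDeriv {φ h G G' : ℝ → ℝ} {h' G'' r : ℝ}
    (hφ : ∀ᶠ t in 𝓝 r, HasDerivAt φ (φ t * h t) t) (hG : ∀ᶠ t in 𝓝 r, HasDerivAt G (G' t) t)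
    (hh : HasDerivAt h h' r) (hG' : HasDerivAt G' G'' r) :
    deriv (deriv fun t => φ t * G t) r =
      φ r * ((h r ^ 2 + h') * G r + 2 * h r * G' r + G'') := by
  have hd : deriv (fun t => φ t * G t) =ᶠ[𝓝 r] fun t => φ t * (h t * G t + G' t) := by
    filter_upwards [hφ, hG] with t hφt hGt
    rw [(hφt.fun_mul hGt).deriv]
    ring
  rw [hd.deriv_eq,
    (hφ.self_of_nhds.fun_mul ((hh.fun_mul hG.self_of_nhds).fun_add hG')).deriv]
  ring

section Weight

variable {N α b t : ℝ}

theorem hasDerivAt_rpow_div_one_add_rpow (ht : 0 < t) :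
    HasDerivAt (fun s => s ^ (α - 1) / (1 + s ^ α))
      ((α - 1) * (t ^ (α - 1) / (1 + t ^ α)) / t - α * (t ^ (α - 1) / (1 + t ^ α)) ^ 2) t := by
  have hA : 0 < 1 + t ^ α := by positivity
  have hnum := hasDerivAt_rpow_const (p := α - 1) (Or.inl ht.ne')
  have hden := (hasDerivAt_rpow_const (p := α) (Or.inl ht.ne')).const_add 1
  refine (hnum.div hden hA.ne').congr_deriv ?_
  simp only [rpow_sub_one ht.ne']
  field_simp

theorem hasDerivAt_rpow_mul_one_add_rpow_rpow (c d : ℝ) (ht : 0 < t) :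
    HasDerivAt (fun s => s ^ c * (1 + s ^ α) ^ d)
      (t ^ c * (1 + t ^ α) ^ d * (c / t + d * α * (t ^ (α - 1) / (1 + t ^ α)))) t := by
  have hA : 0 < 1 + t ^ α := by positivity
  have hP := hasDerivAt_rpow_const (p := c) (Or.inl ht.ne')
  have hQ := ((hasDerivAt_rpow_const (p := α) (Or.inl ht.ne')).const_add 1).rpow_const
    (p := d) (Or.inl hA.ne')
  refine (hP.fun_mul hQ).congr_deriv ?_
  rw [rpow_sub_one ht.ne', rpow_sub_one hA.ne']
  field_simp

theorem sq_add_deriv_logDeriv_weight (hα : α ≠ 0) (ht : 0 < t) :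
    ((N - 1) / 2 / t + b / (2 * α) * α * (t ^ (α - 1) / (1 + t ^ α))) ^ 2
      + (-((N - 1) / 2 / t ^ 2) + b / (2 * α) * α *
        ((α - 1) * (t ^ (α - 1) / (1 + t ^ α)) / t - α * (t ^ (α - 1) / (1 + t ^ α)) ^ 2)) =
      (N - 1) * (N - 3) / (4 * t ^ 2) + b / 2 * (N - 2 + α) * t ^ (α - 2) / (1 + t ^ α)
        + b * α / 2 * (b / (2 * α) - 1) * (t ^ (α - 1) / (1 + t ^ α)) ^ 2 := by
  have hA : 0 < 1 + t ^ α := by positivity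
  rw [show α - 2 = α - 1 - 1 by ring, rpow_sub_one ht.ne' (α - 1)]
  field_simp
  ring

theorem deriv_deriv_weight_mul {G G' : ℝ → ℝ} {G'' : ℝ} (hα : α ≠ 0) (ht : 0 < t)
    (hG : ∀ᶠ s in 𝓝 t, HasDerivAt G (G' s) s) (hG' : HasDerivAt G' G'' t) :
    deriv (deriv fun s => s ^ ((N - 1) / 2) * (1 + s ^ α) ^ (b / (2 * α)) * G s) t =
      t ^ ((N - 1) / 2) * (1 + t ^ α) ^ (b / (2 * α)) *
        (((N - 1) * (N - 3) / (4 * t ^ 2) + b / 2 * (N - 2 + α) * t ^ (α - 2) / (1 + t ^ α)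
          + b * α / 2 * (b / (2 * α) - 1) * (t ^ (α - 1) / (1 + t ^ α)) ^ 2) * G t
        + ((N - 1) / t + b * (t ^ (α - 1) / (1 + t ^ α))) * G' t + G'') := by
  have hφ : ∀ᶠ s in 𝓝 t, HasDerivAt (fun s => s ^ ((N - 1) / 2) * (1 + s ^ α) ^ (b / (2 * α)))
      (s ^ ((N - 1) / 2) * (1 + s ^ α) ^ (b / (2 * α)) *
        ((N - 1) / 2 / s + b / (2 * α) * α * (s ^ (α - 1) / (1 + s ^ α)))) s := by
    filter_upwards [Ioi_mem_nhds ht] with s hs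
    exact hasDerivAt_rpow_mul_one_add_rpow_rpow _ _ hs
  have hlog := ((hasDerivAt_const t ((N - 1) / 2)).div (hasDerivAt_id' t) ht.ne').add
    ((hasDerivAt_rpow_div_one_add_rpow (α := α) ht).const_mul (b / (2 * α) * α))
  rw [deriv_deriv_mul_of_logDeriv hφ hG hlog hG', ← sq_add_deriv_logDeriv_weight hα ht]
  field_simp
  ring

end Weight

theorem stmt_8_general (N : ℕ) (α b : ℝ) (hα : 2 < α)
    (G : ℝ → ℝ) (hG : ContDiffOn ℝ 2 G (Set.Ioi 0))
    (g : EuclideanSpace ℝ (Fin N) → ℝ) (hg : ∀ x, g x = G ‖x‖)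
    (w m : ℝ → ℝ)
    (hw : ∀ r : ℝ, w r = r ^ ((N - 1 : ℝ) / 2) * (1 + r ^ α) ^ (b / (2 * α)) * G r)
    (hm : ∀ r : ℝ, m r = (N - 1) * (N - 3) / (4 * r ^ 2)
        + (b / 2) * (N - 2 + α) * r ^ (α - 2) / (1 + r ^ α)
        + (b * α / 2) * (b / (2 * α) - 1) * (r ^ (α - 1) / (1 + r ^ α)) ^ 2)
    (x : EuclideanSpace ℝ (Fin N)) (hx : x ≠ 0) (hwx : w ‖x‖ ≠ 0) :
    laplacian g x + b * (‖x‖ ^ (α - 1) / (1 + ‖x‖ ^ α)) *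
        (inner ℝ ((‖x‖)⁻¹ • x) (gradient g x) : ℝ) =
      (deriv (deriv w) ‖x‖ / w ‖x‖ - m ‖x‖) * g x := by
  obtain rfl : g = fun y => G ‖y‖ := funext hg
  obtain rfl : w = _ := funext hw
  have hr : 0 < ‖x‖ := norm_pos_iff.mpr hx
  have hG' : ∀ᶠ t in 𝓝 ‖x‖, HasDerivAt G (deriv G t) t := by
    filter_upwards [Ioi_mem_nhds hr] with t ht
    exact ((hG.contDiffAt (Ioi_mem_nhds ht)).differentiableAt (by norm_num)).hasDerivAt
  have hG'' : HasDerivAt (deriv G) (deriv (deriv G) ‖x‖) ‖x‖ :=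
    (((hG.deriv_of_isOpen (m := 1) isOpen_Ioi (by norm_num)).contDiffAt
      (Ioi_mem_nhds hr)).differentiableAt (by norm_num)).hasDerivAt
  rw [laplacian_comp_norm hx hG' hG'', inner_gradient_comp_norm hx hG'.self_of_nhds,
    deriv_deriv_weight_mul (by positivity) hr hG' hG'', hm,
    mul_div_mul_left _ _ (left_ne_zero_of_mul hwx)]
  field_simp [right_ne_zero_of_mul hwx]
  ring

theorem stmt_8 (N : ℕ) (hN : 2 < N) (α b : ℝ) (hα : 2 < α)
    (G : ℝ → ℝ) (hG : ContDiffOn ℝ 2 G (Set.Ioi 0)) (hGpos : ∀ r > (0:ℝ), 0 < G r)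
    (g : EuclideanSpace ℝ (Fin N) → ℝ) (hg : ∀ x, g x = G ‖x‖)
    (w m : ℝ → ℝ)
    (hw : ∀ r : ℝ, w r = r ^ ((N - 1 : ℝ) / 2) * (1 + r ^ α) ^ (b / (2 * α)) * G r)
    (hm : ∀ r : ℝ, m r = (N - 1) * (N - 3) / (4 * r ^ 2)
        + (b / 2) * (N - 2 + α) * r ^ (α - 2) / (1 + r ^ α)
        + (b * α / 2) * (b / (2 * α) - 1) * (r ^ (α - 1) / (1 + r ^ α)) ^ 2)
    (x : EuclideanSpace ℝ (Fin N)) (hx : x ≠ 0) (hwx : w ‖x‖ ≠ 0) :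
    laplacian g x + b * (‖x‖ ^ (α - 1) / (1 + ‖x‖ ^ α)) *
        (inner ℝ ((‖x‖)⁻¹ • x) (gradient g x) : ℝ) =
      (deriv (deriv w) ‖x‖ / w ‖x‖ - m ‖x‖) * g x :=
  stmt_8_general N α b hα G hG g hg w m hw hm x hx hwx
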